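/- arXiv:2506.18603 — 9 statements merged into one kernel-verified Lean document; each statement's English description precedes it below -/
import Mathlib

section
/- Let L be the hyperbolic difference operator with coefficients a, b, c and Laplace invariants k, h, and let ψ : ℤ × ℤ → ℂ satisfy Lψ = 0 (i.e. (Lψ)(n,m) = 0 for all n,m). (i) If h is nowhere vanishing, then for all (n,m): ψ(n,m) = −(a(n,m)·b(n,m−1)·h(n,m))⁻¹ · (φ(n,m+1) + a(n,m)φ(n,m)), where φ(n,m) = ψ(n+1,m) + b(n,m−1)ψ(n,m). (ii) If k is nowhere vanishing, then for all (n,m): ψ(n,m) = −(a(n−1,m)·b(n,m)·k(n,m))⁻¹ · (χ(n+1,m) + b(n,m)χ(n,m)), where χ(n,m) = ψ(n,m+1) + a(n−1,m)ψ(n,m). (In other words, the discrete Laplace transformations are inverted, on kernels, by the stated operators.) -/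
noncomputable section

/-- The hyperbolic difference operator with coefficients `a`, `b`, `c`:
`(Lψ)(n,m) = ψ(n+1,m+1) + a(n,m)ψ(n+1,m) + b(n,m)ψ(n,m+1) + c(n,m)ψ(n,m)`. -/
def Lop (a b c : ℤ → ℤ → ℂ) (ψ : ℤ → ℤ → ℂ) : ℤ → ℤ → ℂ :=
  fun n m => ψ (n + 1) (m + 1) + a n m * ψ (n + 1) m + b n m * ψ n (m + 1) + c n m * ψ n m

/-- The Laplace invariant `k(n,m) = c(n,m)/(a(n-1,m)b(n,m)) - 1`. -/
def kInv (a b c : ℤ → ℤ → ℂ) : ℤ → ℤ → ℂ :=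
  fun n m => c n m / (a (n - 1) m * b n m) - 1

/-- The Laplace invariant `h(n,m) = c(n,m)/(a(n,m)b(n,m-1)) - 1`. -/
def hInv (a b c : ℤ → ℤ → ℂ) : ℤ → ℤ → ℂ :=
  fun n m => c n m / (a n m * b n (m - 1)) - 1

/-- The operator `(Dψ)(n,m) = ψ(n+1,m) + b(n,m-1)ψ(n,m)`. -/
def Dop (b : ℤ → ℤ → ℂ) (ψ : ℤ → ℤ → ℂ) : ℤ → ℤ → ℂ :=
  fun n m => ψ (n + 1) m + b n (m - 1) * ψ n m

/-- `L̂` (coefficients `a' b' c'`) is a Laplace transform of `L` (coefficients `a b c`). -/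
def IsLaplaceTransform (a' b' c' a b c : ℤ → ℤ → ℂ) : Prop :=
  ∃ q : ℤ → ℤ → ℂ, ∀ ψ : ℤ → ℤ → ℂ, ∀ n m : ℤ,
    Lop a' b' c' (Dop b ψ) n m = Lop a b c ψ (n + 1) m + q n m * Lop a b c ψ n m

/-! For every `ψ`, `Dψ(n,m+1) + a Dψ(n,m) = Lψ(n,m) - a b h ψ(n,m)` (with `b` taken at `(n,m-1)`),
and symmetrically `χ(n+1,m) + b χ(n,m) = Lψ(n,m) - a b k ψ(n,m)` (with `a` taken at `(n-1,m)`).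
On the kernel of `L` the first term vanishes, so wherever the invariant is nonzero `ψ` is
recovered by dividing by `-a b h`, respectively `-a b k`. -/

def Cop (a ψ : ℤ → ℤ → ℂ) : ℤ → ℤ → ℂ :=
  fun n m => ψ n (m + 1) + a (n - 1) m * ψ n m

theorem eq_neg_inv_mul_of_eq_neg_mul {K : Type*} [Field K] {u x y : K} (hu : u ≠ 0)
    (h : y = -(u * x)) : x = -u⁻¹ * y := by
  rw [neg_mul, ← mul_neg, eq_inv_mul_iff_mul_eq₀ hu, h, neg_neg]

theorem Dop_add_mul_Dop_eq (a b c ψ : ℤ → ℤ → ℂ) {n m : ℤ} (ha : a n m ≠ 0)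
    (hb : b n (m - 1) ≠ 0) :
    Dop b ψ n (m + 1) + a n m * Dop b ψ n m
      = Lop a b c ψ n m - a n m * b n (m - 1) * hInv a b c n m * ψ n m := by
  simp only [Dop, Lop, hInv, add_sub_cancel_right]
  field_simp
  ring

theorem Cop_add_mul_Cop_eq (a b c ψ : ℤ → ℤ → ℂ) {n m : ℤ} (ha : a (n - 1) m ≠ 0)
    (hb : b n m ≠ 0) :
    Cop a ψ (n + 1) m + b n m * Cop a ψ n m
      = Lop a b c ψ n m - a (n - 1) m * b n m * kInv a b c n m * ψ n m := by
  simp only [Cop, Lop, kInv, add_sub_cancel_right]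
  field_simp
  ring

/-- on the kernel of `L`, the discrete Laplace transformations are inverted
by the stated operators. -/
theorem stmt2 (a b c : ℤ → ℤ → ℂ)
    (ha : ∀ n m, a n m ≠ 0) (hb : ∀ n m, b n m ≠ 0)
    (ψ : ℤ → ℤ → ℂ) (hψ : ∀ n m, Lop a b c ψ n m = 0) :
    ((∀ n m, hInv a b c n m ≠ 0) → ∀ n m : ℤ,
      ψ n m = -(a n m * b n (m - 1) * hInv a b c n m)⁻¹ *
        (Dop b ψ n (m + 1) + a n m * Dop b ψ n m)) ∧
    ((∀ n m, kInv a b c n m ≠ 0) → ∀ n m : ℤ,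
      ψ n m = -(a (n - 1) m * b n m * kInv a b c n m)⁻¹ *
        ((fun n' m' => ψ n' (m' + 1) + a (n' - 1) m' * ψ n' m') (n + 1) m
          + b n m * (fun n' m' => ψ n' (m' + 1) + a (n' - 1) m' * ψ n' m') n m)) := by
  refine ⟨fun hh n m => ?_, fun hk n m => ?_⟩
  · apply eq_neg_inv_mul_of_eq_neg_mul (by simp [ha, hb, hh])
    rw [Dop_add_mul_Dop_eq a b c ψ (ha n m) (hb n (m - 1)), hψ, zero_sub]
  · change ψ n m = _ * (Cop a ψ (n + 1) m + b n m * Cop a ψ n m)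
    apply eq_neg_inv_mul_of_eq_neg_mul (by simp [ha, hb, hk])
    rw [Cop_add_mul_Cop_eq a b c ψ (ha (n - 1) m) (hb n m), hψ, zero_sub]
end
end

section
/- Let L_{j−1}, L_j, L_{j+1} be hyperbolic difference operators (with nowhere-vanishing a- and b-coefficients) such that L_j is a Laplace transform of L_{j−1} and L_{j+1} is a Laplace transform of L_j, and denote their Laplace invariants by k_{j−1}, h_{j−1}, k_j, h_j, k_{j+1}, h_{j+1}. Then k_{j+1}(n,m) = h_j(n,m) and k_j(n,m) = h_{j−1}(n,m) for all (n,m), and the purely discrete two-dimensional Toda lattice identity holds: h_j(n+1,m)·h_j(n,m−1)·(1 + h_j(n,m))·(1 + h_j(n+1,m−1)) = h_j(n,m)·h_j(n+1,m−1)·(1 + h_{j+1}(n,m))·(1 + h_{j−1}(n+1,m−1)) for all (n,m). -/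
noncomputable section

/-!
Testing the intertwining relation `L̂ ∘ D = (shift + q) ∘ L` on delta functions shows that
`q = b̂`, `â(n,m) = a(n+1,m)`, `ĉ(n,m) b(n,m-1) = b̂(n,m) c(n,m)` and
`â(n,m) b(n+1,m-1) + ĉ(n,m) = c(n+1,m) + b̂(n,m) a(n,m)`.
The first two relations give `k̂ = h`. Writing `h = H / (a(n,m) b(n,m-1))` with
`H = c - a(n,m) b(n,m-1)`, the relations say that `H` is carried along by the transform:
`b̂(n,m) H(n,m) = H(n+1,m) b(n,m-1)` and `ĉ(n,m) H(n,m) = c(n,m) H(n+1,m)`. After clearing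
denominators the Toda identity is a combination of these two.
-/

def hNum (a b c : ℤ → ℤ → ℂ) : ℤ → ℤ → ℂ :=
  fun n m => c n m - a n m * b n (m - 1)

section LaplaceInvariants

variable {a b c : ℤ → ℤ → ℂ}

theorem one_add_hInv (n m : ℤ) :
    1 + hInv a b c n m = c n m / (a n m * b n (m - 1)) := by
  simp only [hInv, add_sub_cancel]

theorem one_add_kInv (n m : ℤ) :
    1 + kInv a b c n m = c n m / (a (n - 1) m * b n m) := by
  simp only [kInv, add_sub_cancel]

theorem hInv_eq_hNum_div {n m : ℤ} (ha : a n m ≠ 0) (hb : b n (m - 1) ≠ 0) :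
    hInv a b c n m = hNum a b c n m / (a n m * b n (m - 1)) := by
  rw [hInv, hNum, div_sub_one (mul_ne_zero ha hb)]

end LaplaceInvariants

namespace IsLaplaceTransform

variable {a' b' c' a b c : ℤ → ℤ → ℂ}

theorem coeff_relations (h : IsLaplaceTransform a' b' c' a b c) (n m : ℤ) :
    a' n m = a (n + 1) m ∧ c' n m * b n (m - 1) = b' n m * c n m ∧
      a' n m * b (n + 1) (m - 1) + c' n m = c (n + 1) m + b' n m * a n m := by
  obtain ⟨q, hq⟩ := h
  have hδ (i j : ℤ) := hq (fun x y => if x = i ∧ y = j then 1 else 0) n m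
  have hq_eq : b' n m = q n m := by simpa [Lop, Dop] using hδ (n + 1) (m + 1)
  have e : n + 1 + 1 = n + 2 := by ring
  exact ⟨by simpa [Lop, Dop, e] using hδ (n + 2) m,
    by simpa [Lop, Dop, e, ← hq_eq] using hδ n m,
    by simpa [Lop, Dop, ← hq_eq] using hδ (n + 1) m⟩

theorem kInv_eq_hInv (h : IsLaplaceTransform a' b' c' a b c) (hb : ∀ n m, b n m ≠ 0)
    (hb' : ∀ n m, b' n m ≠ 0) (n m : ℤ) : kInv a' b' c' n m = hInv a b c n m := by
  obtain ⟨-, h_c, -⟩ := h.coeff_relations n m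
  obtain ⟨h_a, -, -⟩ := h.coeff_relations (n - 1) m
  have h_div : c' n m / b' n m = c n m / b n (m - 1) :=
    (div_eq_div_iff (hb' n m) (hb n (m - 1))).2 (by linear_combination h_c)
  rw [kInv, hInv, h_a, sub_add_cancel, mul_comm (a n m), mul_comm (a n m), ← div_div, ← div_div,
    h_div]

theorem b_mul_hNum (h : IsLaplaceTransform a' b' c' a b c) (n m : ℤ) :
    b' n m * hNum a b c n m = hNum a b c (n + 1) m * b n (m - 1) := by
  obtain ⟨h_a, h_c, h_ac⟩ := h.coeff_relations n m
  simp only [hNum]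
  linear_combination -h_c + b n (m - 1) * h_ac - b n (m - 1) * b (n + 1) (m - 1) * h_a

theorem c_mul_hNum (h : IsLaplaceTransform a' b' c' a b c) (hb : ∀ n m, b n m ≠ 0) (n m : ℤ) :
    c' n m * hNum a b c n m = c n m * hNum a b c (n + 1) m := by
  obtain ⟨-, h_c, -⟩ := h.coeff_relations n m
  refine mul_left_cancel₀ (hb n (m - 1)) ?_
  linear_combination hNum a b c n m * h_c + c n m * h.b_mul_hNum n m

theorem toda (h : IsLaplaceTransform a' b' c' a b c) (ha : ∀ n m, a n m ≠ 0)
    (hb : ∀ n m, b n m ≠ 0) (hb' : ∀ n m, b' n m ≠ 0) (n m : ℤ) :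
    hInv a b c (n + 1) m * hInv a b c n (m - 1) * (1 + hInv a b c n m) *
        (1 + hInv a b c (n + 1) (m - 1)) =
      hInv a b c n m * hInv a b c (n + 1) (m - 1) * (1 + hInv a' b' c' n m) *
        (1 + kInv a b c (n + 1) (m - 1)) := by
  have core : hNum a b c (n + 1) m * hNum a b c n (m - 1) * c n m * b' n (m - 1) =
      hNum a b c n m * hNum a b c (n + 1) (m - 1) * c' n m * b n (m - 1 - 1) := by
    linear_combination hNum a b c (n + 1) m * c n m * h.b_mul_hNum n (m - 1) -
      hNum a b c (n + 1) (m - 1) * b n (m - 1 - 1) * h.c_mul_hNum hb n m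
  obtain ⟨h_a, -, -⟩ := h.coeff_relations n m
  rw [one_add_hInv, one_add_hInv, one_add_hInv, one_add_kInv, h_a, add_sub_cancel_right]
  simp only [hInv_eq_hNum_div (ha _ _) (hb _ _), div_mul_div_comm]
  rw [div_eq_div_iff (by simp [ha, hb]) (by simp [ha, hb, hb'])]
  linear_combination c (n + 1) (m - 1) * a n m * b n (m - 1) * a (n + 1) (m - 1) *
    b (n + 1) (m - 1 - 1) * a (n + 1) m * a n (m - 1) * b (n + 1) (m - 1) * core

end IsLaplaceTransform

theorem stmt3_general (a₀ b₀ c₀ a₁ b₁ c₁ a₂ b₂ c₂ : ℤ → ℤ → ℂ)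
    (hb₀ : ∀ n m, b₀ n m ≠ 0)
    (ha₁ : ∀ n m, a₁ n m ≠ 0) (hb₁ : ∀ n m, b₁ n m ≠ 0)
    (hb₂ : ∀ n m, b₂ n m ≠ 0)
    (h01 : IsLaplaceTransform a₁ b₁ c₁ a₀ b₀ c₀)
    (h12 : IsLaplaceTransform a₂ b₂ c₂ a₁ b₁ c₁) :
    (∀ n m, kInv a₂ b₂ c₂ n m = hInv a₁ b₁ c₁ n m) ∧
    (∀ n m, kInv a₁ b₁ c₁ n m = hInv a₀ b₀ c₀ n m) ∧
    (∀ n m : ℤ,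
      hInv a₁ b₁ c₁ (n + 1) m * hInv a₁ b₁ c₁ n (m - 1) *
        (1 + hInv a₁ b₁ c₁ n m) * (1 + hInv a₁ b₁ c₁ (n + 1) (m - 1)) =
      hInv a₁ b₁ c₁ n m * hInv a₁ b₁ c₁ (n + 1) (m - 1) *
        (1 + hInv a₂ b₂ c₂ n m) * (1 + hInv a₀ b₀ c₀ (n + 1) (m - 1))) := by
  have hk₁ := h01.kInv_eq_hInv hb₀ hb₁
  refine ⟨h12.kInv_eq_hInv hb₁ hb₂, hk₁, fun n m => ?_⟩
  rw [← hk₁]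
  exact h12.toda ha₁ hb₁ hb₂ n m

/-- Laplace invariants of three consecutive operators in a Laplace series
satisfy `k_{j+1} = h_j`, `k_j = h_{j-1}` and the purely discrete 2D Toda lattice identity. -/
theorem stmt3 (a₀ b₀ c₀ a₁ b₁ c₁ a₂ b₂ c₂ : ℤ → ℤ → ℂ)
    (ha₀ : ∀ n m, a₀ n m ≠ 0) (hb₀ : ∀ n m, b₀ n m ≠ 0)
    (ha₁ : ∀ n m, a₁ n m ≠ 0) (hb₁ : ∀ n m, b₁ n m ≠ 0)
    (ha₂ : ∀ n m, a₂ n m ≠ 0) (hb₂ : ∀ n m, b₂ n m ≠ 0)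
    (h01 : IsLaplaceTransform a₁ b₁ c₁ a₀ b₀ c₀)
    (h12 : IsLaplaceTransform a₂ b₂ c₂ a₁ b₁ c₁) :
    (∀ n m, kInv a₂ b₂ c₂ n m = hInv a₁ b₁ c₁ n m) ∧
    (∀ n m, kInv a₁ b₁ c₁ n m = hInv a₀ b₀ c₀ n m) ∧
    (∀ n m : ℤ,
      hInv a₁ b₁ c₁ (n + 1) m * hInv a₁ b₁ c₁ n (m - 1) *
        (1 + hInv a₁ b₁ c₁ n m) * (1 + hInv a₁ b₁ c₁ (n + 1) (m - 1)) =
      hInv a₁ b₁ c₁ n m * hInv a₁ b₁ c₁ (n + 1) (m - 1) *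
        (1 + hInv a₂ b₂ c₂ n m) * (1 + hInv a₀ b₀ c₀ (n + 1) (m - 1))) :=
  stmt3_general a₀ b₀ c₀ a₁ b₁ c₁ a₂ b₂ c₂ hb₀ ha₁ hb₁ hb₂ h01 h12
end
end

section
/- Let r ≥ 1 and let L_0, L_1, …, L_r be hyperbolic difference operators with coefficients a_j, b_j, c_j and Laplace invariants k_j, h_j, such that L_{j+1} is a Laplace transform of L_j for 0 ≤ j < r, h_j is nowhere vanishing for 0 ≤ j ≤ r−1, and h_r vanishes identically. For 0 ≤ j ≤ r−1 define the operator M_j on functions χ : ℤ × ℤ → ℂ by (M_j χ)(n,m) = −(a_j(n,m)·b_j(n,m−1)·h_j(n,m))⁻¹ · (χ(n,m+1) + a_j(n,m)χ(n,m)). Then a function ψ : ℤ × ℤ → ℂ satisfies L_0ψ = 0 if and only if there exists ψ_r : ℤ × ℤ → ℂ with L_rψ_r = 0 and ψ = M_0(M_1(⋯(M_{r−1}ψ_r)⋯)). -/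
noncomputable section

/-- The operator `M_j` built from the coefficients of `L_j`:
`(Mχ)(n,m) = -(a(n,m)b(n,m-1)h(n,m))⁻¹ (χ(n,m+1) + a(n,m)χ(n,m))`. -/
def Mop (a b c : ℤ → ℤ → ℂ) (χ : ℤ → ℤ → ℂ) : ℤ → ℤ → ℂ :=
  fun n m => -(a n m * b n (m - 1) * hInv a b c n m)⁻¹ * (χ n (m + 1) + a n m * χ n m)

/-- `composeM a b c r = M_0 ∘ M_1 ∘ ⋯ ∘ M_{r-1}`. -/
def composeM (a b c : ℕ → ℤ → ℤ → ℂ) : ℕ → (ℤ → ℤ → ℂ) → (ℤ → ℤ → ℂ)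
  | 0 => id
  | r + 1 => fun χ => composeM a b c r (Mop (a r) (b r) (c r) χ)

/-!
Write `e = c - a b(·, m-1)`, so that `a b(·, m-1) h = e` and `M = -e⁻¹ N` with
`(Nχ)(n,m) = χ(n,m+1) + a(n,m) χ(n,m)`. Then `L = N D + e` factorizes, hence `M D = id` on
`Ker L` whenever `h ≠ 0`. Comparing coefficients in `L̂ D = (T + q) L` (with `T` the shift in `n`)
gives `D M = id` on `Ker L̂`, and then the factorization yields `L M = 0` on `Ker L̂`. So `D` and
`M` are mutually inverse bijections between `Ker L_j` and `Ker L_{j+1}`, and the cascade follows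
by induction along the chain.
-/

section Factorization

variable {a b c : ℤ → ℤ → ℂ} {n m : ℤ}

theorem mul_mul_hInv (ha : a n m ≠ 0) (hb : b n (m - 1) ≠ 0) :
    a n m * b n (m - 1) * hInv a b c n m = c n m - a n m * b n (m - 1) := by
  rw [hInv]
  field_simp

theorem sub_mul_ne_zero_of_hInv_ne_zero (ha : a n m ≠ 0) (hb : b n (m - 1) ≠ 0)
    (hh : hInv a b c n m ≠ 0) : c n m - a n m * b n (m - 1) ≠ 0 := by
  rw [← mul_mul_hInv ha hb]
  exact mul_ne_zero (mul_ne_zero ha hb) hh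

theorem Mop_apply (ha : a n m ≠ 0) (hb : b n (m - 1) ≠ 0) (χ : ℤ → ℤ → ℂ) :
    Mop a b c χ n m = -(c n m - a n m * b n (m - 1))⁻¹ * (χ n (m + 1) + a n m * χ n m) := by
  rw [Mop, mul_mul_hInv ha hb]

theorem Lop_eq_Dop_add (ψ : ℤ → ℤ → ℂ) :
    Lop a b c ψ n m = Dop b ψ n (m + 1) + a n m * Dop b ψ n m
      + (c n m - a n m * b n (m - 1)) * ψ n m := by
  simp only [Lop, Dop, add_sub_cancel_right]
  ring

theorem Mop_Dop_of_Lop_eq_zero (ha : a n m ≠ 0) (hb : b n (m - 1) ≠ 0)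
    (hh : hInv a b c n m ≠ 0) {ψ : ℤ → ℤ → ℂ} (hψ : Lop a b c ψ n m = 0) :
    Mop a b c (Dop b ψ) n m = ψ n m := by
  have he := sub_mul_ne_zero_of_hInv_ne_zero ha hb hh
  rw [Lop_eq_Dop_add] at hψ
  rw [Mop_apply ha hb]
  field_simp
  linear_combination -hψ

theorem Lop_Mop_eq_zero_of_Dop_Mop (ha : a n m ≠ 0) (hb : b n (m - 1) ≠ 0)
    (hh : hInv a b c n m ≠ 0) {χ : ℤ → ℤ → ℂ} (h₀ : Dop b (Mop a b c χ) n m = χ n m)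
    (h₁ : Dop b (Mop a b c χ) n (m + 1) = χ n (m + 1)) :
    Lop a b c (Mop a b c χ) n m = 0 := by
  have he := sub_mul_ne_zero_of_hInv_ne_zero ha hb hh
  rw [Lop_eq_Dop_add, h₀, h₁, Mop_apply ha hb]
  field_simp
  ring

end Factorization

section LaplaceTransform

variable {a' b' c' a b c q : ℤ → ℤ → ℂ} {n m : ℤ}

/-- The coefficients of `L̂` are read off by testing `L̂ D = (T + q) L` on unit impulses. -/
theorem coeff_eq_of_Lop_Dop_eq (ht : ∀ ψ n m,
      Lop a' b' c' (Dop b ψ) n m = Lop a b c ψ (n + 1) m + q n m * Lop a b c ψ n m)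
    (hb : b n m ≠ 0) :
    a' n m = a (n + 1) m ∧
      b' n m * (c n m - a n m * b n (m - 1)) =
        (c (n + 1) m - a (n + 1) m * b (n + 1) (m - 1)) * b n (m - 1) ∧
      c' n m * (c n m - a n m * b n (m - 1)) =
        c n m * (c (n + 1) m - a (n + 1) m * b (n + 1) (m - 1)) := by
  have h₁ := ht (Pi.single (n + 2) (Pi.single m 1)) n m
  have h₂ := ht (Pi.single n (Pi.single (m + 1) 1)) n m
  have h₃ := ht (Pi.single n (Pi.single m 1)) n m
  have h₄ := ht (Pi.single (n + 1) (Pi.single m 1)) n m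
  simp only [Lop, Dop, add_assoc, one_add_one_eq_two, Pi.single_eq_same, ne_eq, add_eq_left,
    one_ne_zero, not_false_eq_true, Pi.single_eq_of_ne, add_sub_cancel_right, add_right_inj,
    OfNat.one_ne_ofNat, Pi.zero_apply, mul_zero, add_zero, mul_one, zero_add, left_eq_add,
    OfNat.ofNat_ne_zero, mul_eq_mul_right_iff, OfNat.ofNat_ne_one] at h₁ h₂ h₃ h₄
  rw [h₂.resolve_right hb, h₁] at *
  exact ⟨rfl, by linear_combination b n (m - 1) * h₄ - h₃,
    by linear_combination c n m * h₄ - a n m * h₃⟩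

theorem Dop_Mop_of_Lop_eq_zero (ht : ∀ ψ n m,
      Lop a' b' c' (Dop b ψ) n m = Lop a b c ψ (n + 1) m + q n m * Lop a b c ψ n m)
    (ha : ∀ n m, a n m ≠ 0) (hb : ∀ n m, b n m ≠ 0) (hh : ∀ n m, hInv a b c n m ≠ 0)
    {χ : ℤ → ℤ → ℂ} (hχ : Lop a' b' c' χ n m = 0) :
    Dop b (Mop a b c χ) n m = χ n m := by
  obtain ⟨ha', hb', hc'⟩ := coeff_eq_of_Lop_Dop_eq ht (hb n m)
  have he₀ := sub_mul_ne_zero_of_hInv_ne_zero (ha n m) (hb n (m - 1)) (hh n m)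
  have he₁ := sub_mul_ne_zero_of_hInv_ne_zero (ha (n + 1) m) (hb (n + 1) (m - 1)) (hh (n + 1) m)
  rw [Lop, ha'] at hχ
  rw [Dop, Mop_apply (ha n m) (hb n (m - 1)), Mop_apply (ha (n + 1) m) (hb (n + 1) (m - 1))]
  generalize he : c n m - a n m * b n (m - 1) = e₀ at *
  generalize c (n + 1) m - a (n + 1) m * b (n + 1) (m - 1) = e₁ at *
  field_simp
  linear_combination -e₀ * hχ + χ n (m + 1) * hb' + χ n m * hc' + e₁ * χ n m * he

end LaplaceTransform

namespace IsLaplaceTransform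

variable {a' b' c' a b c : ℤ → ℤ → ℂ}

theorem Lop_Dop_eq_zero (h : IsLaplaceTransform a' b' c' a b c) {ψ : ℤ → ℤ → ℂ}
    (hψ : ∀ n m, Lop a b c ψ n m = 0) (n m : ℤ) : Lop a' b' c' (Dop b ψ) n m = 0 := by
  obtain ⟨q, hq⟩ := h
  rw [hq, hψ, hψ, mul_zero, add_zero]

theorem Lop_Mop_eq_zero (h : IsLaplaceTransform a' b' c' a b c) (ha : ∀ n m, a n m ≠ 0)
    (hb : ∀ n m, b n m ≠ 0) (hh : ∀ n m, hInv a b c n m ≠ 0) {χ : ℤ → ℤ → ℂ}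
    (hχ : ∀ n m, Lop a' b' c' χ n m = 0) (n m : ℤ) : Lop a b c (Mop a b c χ) n m = 0 := by
  obtain ⟨q, hq⟩ := h
  exact Lop_Mop_eq_zero_of_Dop_Mop (ha n m) (hb n (m - 1)) (hh n m)
    (Dop_Mop_of_Lop_eq_zero hq ha hb hh (hχ n m)) (Dop_Mop_of_Lop_eq_zero hq ha hb hh (hχ n (m + 1)))

end IsLaplaceTransform

def IsLaplaceChain (a b c : ℕ → ℤ → ℤ → ℂ) (s : ℕ) : Prop :=
  ∀ j < s, (∀ n m, a j n m ≠ 0) ∧ (∀ n m, b j n m ≠ 0) ∧ (∀ n m, hInv (a j) (b j) (c j) n m ≠ 0) ∧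
    IsLaplaceTransform (a (j + 1)) (b (j + 1)) (c (j + 1)) (a j) (b j) (c j)

namespace IsLaplaceChain

variable {a b c : ℕ → ℤ → ℤ → ℂ} {s : ℕ}

theorem of_succ (h : IsLaplaceChain a b c (s + 1)) : IsLaplaceChain a b c s :=
  fun j hj => h j (Nat.lt_succ_of_lt hj)

theorem Lop_composeM_eq_zero (h : IsLaplaceChain a b c s) {φ : ℤ → ℤ → ℂ}
    (hφ : ∀ n m, Lop (a s) (b s) (c s) φ n m = 0) :
    ∀ n m, Lop (a 0) (b 0) (c 0) (composeM a b c s φ) n m = 0 := by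
  induction s generalizing φ with
  | zero => exact hφ
  | succ t ih =>
    obtain ⟨ha, hb, hh, hL⟩ := h t t.lt_succ_self
    exact ih h.of_succ (hL.Lop_Mop_eq_zero ha hb hh hφ)

theorem exists_eq_composeM (h : IsLaplaceChain a b c s) {ψ : ℤ → ℤ → ℂ}
    (hψ : ∀ n m, Lop (a 0) (b 0) (c 0) ψ n m = 0) :
    ∃ φ, (∀ n m, Lop (a s) (b s) (c s) φ n m = 0) ∧ ψ = composeM a b c s φ := by
  induction s with
  | zero => exact ⟨ψ, hψ, rfl⟩
  | succ t ih =>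
    obtain ⟨φ, hφ, rfl⟩ := ih h.of_succ
    obtain ⟨ha, hb, hh, hL⟩ := h t t.lt_succ_self
    have hMD : Mop (a t) (b t) (c t) (Dop (b t) φ) = φ := funext₂ fun n m =>
      Mop_Dop_of_Lop_eq_zero (ha n m) (hb n (m - 1)) (hh n m) (hφ n m)
    exact ⟨Dop (b t) φ, hL.Lop_Dop_eq_zero hφ, (congrArg (composeM a b c t) hMD).symm⟩

end IsLaplaceChain

theorem stmt4_general (r : ℕ) (a b c : ℕ → ℤ → ℤ → ℂ)
    (ha : ∀ j ≤ r, ∀ n m, a j n m ≠ 0) (hb : ∀ j ≤ r, ∀ n m, b j n m ≠ 0)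
    (hchain : ∀ j < r,
      IsLaplaceTransform (a (j + 1)) (b (j + 1)) (c (j + 1)) (a j) (b j) (c j))
    (hmid : ∀ j ≤ r - 1, ∀ n m, hInv (a j) (b j) (c j) n m ≠ 0)
    (ψ : ℤ → ℤ → ℂ) :
    (∀ n m, Lop (a 0) (b 0) (c 0) ψ n m = 0) ↔
      ∃ ψr : ℤ → ℤ → ℂ, (∀ n m, Lop (a r) (b r) (c r) ψr n m = 0) ∧
        ψ = composeM a b c r ψr := by
  have h : IsLaplaceChain a b c r := fun j hj =>
    ⟨ha j hj.le, hb j hj.le, hmid j (Nat.le_sub_one_of_lt hj), hchain j hj⟩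
  constructor
  · exact h.exists_eq_composeM
  · rintro ⟨ψr, hψr, rfl⟩
    exact h.Lop_composeM_eq_zero hψr

/-- the Laplace cascade: `ψ ∈ Ker L_0` iff `ψ = M_0(M_1(⋯(M_{r-1}ψ_r)⋯))`
for some `ψ_r ∈ Ker L_r`. -/
theorem stmt4 (r : ℕ) (hr : 1 ≤ r) (a b c : ℕ → ℤ → ℤ → ℂ)
    (ha : ∀ j ≤ r, ∀ n m, a j n m ≠ 0) (hb : ∀ j ≤ r, ∀ n m, b j n m ≠ 0)
    (hchain : ∀ j < r,
      IsLaplaceTransform (a (j + 1)) (b (j + 1)) (c (j + 1)) (a j) (b j) (c j))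
    (hmid : ∀ j ≤ r - 1, ∀ n m, hInv (a j) (b j) (c j) n m ≠ 0)
    (hend : ∀ n m, hInv (a r) (b r) (c r) n m = 0)
    (ψ : ℤ → ℤ → ℂ) :
    (∀ n m, Lop (a 0) (b 0) (c 0) ψ n m = 0) ↔
      ∃ ψr : ℤ → ℤ → ℂ, (∀ n m, Lop (a r) (b r) (c r) ψr n m = 0) ∧
        ψ = composeM a b c r ψr :=
  stmt4_general r a b c ha hb hchain hmid ψ
end
end

section
/- Let r ≥ 1 and let L_0, L_1, …, L_r be hyperbolic difference operators such that L_{j+1} is a Laplace transform of L_j for 0 ≤ j < r, the Laplace invariant h_j of L_j is nowhere vanishing for 0 ≤ j ≤ r−1, and h_r vanishes identically. Then there exist functions B_0, B_1, …, B_r : ℤ × ℤ → ℂ, with B_0 and B_r nowhere vanishing, such that for every function M : ℤ → ℂ the function ψ(n,m) = Σ_{i=0}^{r} B_i(n,m)·M(m+i) satisfies L_0ψ = 0. -/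
noncomputable section

/-! ### Auxiliary machinery -/

/-- A two-sided product over `ℤ`. -/
def Zprod (f : ℤ → ℂ) : ℤ → ℂ := fun n =>
  if 0 ≤ n then ∏ k ∈ Finset.range n.toNat, f k
  else (∏ k ∈ Finset.range (-n).toNat, f (-((k : ℤ) + 1)))⁻¹

lemma Zprod_ne_zero (f : ℤ → ℂ) (hf : ∀ k, f k ≠ 0) (n : ℤ) : Zprod f n ≠ 0 := by
  unfold Zprod
  split_ifs
  · exact Finset.prod_ne_zero_iff.2 fun k _ => hf _
  · exact inv_ne_zero (Finset.prod_ne_zero_iff.2 fun k _ => hf _)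

lemma Zprod_succ (f : ℤ → ℂ) (hf : ∀ k, f k ≠ 0) (n : ℤ) :
    Zprod f (n + 1) = f n * Zprod f n := by
  by_cases h : 0 ≤ n
  · have h1 : 0 ≤ n + 1 := by omega
    have h2 : (n + 1).toNat = n.toNat + 1 := by omega
    simp only [Zprod, if_pos h, if_pos h1, h2, Finset.prod_range_succ,
      Int.toNat_of_nonneg h]
    ring
  · by_cases h2 : n = -1
    · subst h2
      norm_num [Zprod]
      rw [mul_inv_cancel₀ (hf _)]
    · have h3 : ¬ (0 ≤ n + 1) := by omega
      have h4 : (-n).toNat = (-(n + 1)).toNat + 1 := by omega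
      simp only [Zprod, if_neg h, if_neg h3, h4, Finset.prod_range_succ]
      rw [mul_inv_rev, show (-(((-(n + 1)).toNat : ℤ) + 1)) = n by omega]
      rw [← mul_assoc, mul_inv_cancel₀ (hf n), one_mul]

/-- Pointwise congruence for `Lop`. -/
lemma Lop_congr (a b c : ℤ → ℤ → ℂ) (ψ₁ ψ₂ : ℤ → ℤ → ℂ)
    (h : ∀ n m, ψ₁ n m = ψ₂ n m) (n m : ℤ) :
    Lop a b c ψ₁ n m = Lop a b c ψ₂ n m := by
  simp only [Lop, h]

/-- Extraction of the coefficient relations from the Laplace-transform identity. -/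
lemma extract (a' b' c' a b c q : ℤ → ℤ → ℂ) (hb : ∀ n m, b n m ≠ 0)
    (hT : ∀ ψ : ℤ → ℤ → ℂ, ∀ n m : ℤ,
      Lop a' b' c' (Dop b ψ) n m = Lop a b c ψ (n + 1) m + q n m * Lop a b c ψ n m)
    (n m : ℤ) :
    a' n m = a (n + 1) m ∧ b' n m = q n m ∧
    c' n m * b n (m - 1) = q n m * c n m ∧
    a' n m * b (n + 1) (m - 1) + c' n m = c (n + 1) m + q n m * a n m := by
  have e1 : n + 1 + 1 = n + 2 := by ring
  refine ⟨?_, ?_, ?_, ?_⟩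
  · have h := hT (fun x y => if x = n + 2 ∧ y = m then 1 else 0) n m
    simp only [Lop, Dop] at h
    simp only [e1, and_true, eq_self_iff_true, true_and, add_sub_cancel_right] at h
    split_ifs at h <;> try (exfalso; omega)
    linear_combination h
  · have h := hT (fun x y => if x = n ∧ y = m + 1 then 1 else 0) n m
    simp only [Lop, Dop] at h
    simp only [e1, and_true, eq_self_iff_true, true_and, add_sub_cancel_right] at h
    split_ifs at h <;> try (exfalso; omega)
    have h2 : b' n m * b n m = q n m * b n m := by linear_combination h
    exact mul_right_cancel₀ (hb n m) h2
  · have h := hT (fun x y => if x = n ∧ y = m then 1 else 0) n m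
    simp only [Lop, Dop] at h
    simp only [e1, and_true, eq_self_iff_true, true_and, add_sub_cancel_right] at h
    split_ifs at h <;> try (exfalso; omega)
    linear_combination h
  · have h := hT (fun x y => if x = n + 1 ∧ y = m then 1 else 0) n m
    simp only [Lop, Dop] at h
    simp only [e1, and_true, eq_self_iff_true, true_and, add_sub_cancel_right] at h
    split_ifs at h <;> try (exfalso; omega)
    linear_combination h

/-- The inverse Laplace transform: from a solution `φ` of `L'φ = 0` one builds a
solution `ψ` of `Lψ = 0`, provided `g = c - a·b(·,·-1)` is nowhere zero. -/
lemma inv_step (a' b' c' a b c q g : ℤ → ℤ → ℂ) (φ ψ : ℤ → ℤ → ℂ)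
    (hgdef : ∀ n m, g n m = c n m - a n m * b n (m - 1))
    (hg : ∀ n m, g n m ≠ 0)
    (hψ : ∀ n m, ψ n m = -(φ n (m + 1) + a n m * φ n m) / g n m)
    (h_a : ∀ n m, a' n m = a (n + 1) m)
    (h_b : ∀ n m, b' n m = q n m)
    (h_c : ∀ n m, c' n m * b n (m - 1) = q n m * c n m)
    (h_mid : ∀ n m, a' n m * b (n + 1) (m - 1) + c' n m = c (n + 1) m + q n m * a n m)
    (hφ : ∀ n m, Lop a' b' c' φ n m = 0) :
    ∀ n m, Lop a b c ψ n m = 0 := by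
  have hc' : ∀ n m, c' n m = g (n + 1) m + b' n m * a n m := by
    intro n m
    linear_combination h_mid n m - b (n + 1) (m - 1) * h_a n m - a n m * h_b n m -
      hgdef (n + 1) m
  have hstar : ∀ n m, b' n m * g n m = b n (m - 1) * g (n + 1) m := by
    intro n m
    linear_combination b' n m * hgdef n m + c n m * h_b n m - h_c n m +
      b n (m - 1) * hc' n m
  have e2 : ∀ n m, ψ n m * g n m = -(φ n (m + 1) + a n m * φ n m) := by
    intro n m
    rw [hψ n m, div_mul_cancel₀ _ (hg n m)]
  have hD : ∀ n m, ψ (n + 1) m + b n (m - 1) * ψ n m = φ n m := by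
    intro n m
    have h0 := hφ n m
    simp only [Lop] at h0
    apply mul_right_cancel₀ (mul_ne_zero (hg n m) (hg (n + 1) m))
    linear_combination g n m * e2 (n + 1) m + b n (m - 1) * g (n + 1) m * e2 n m -
      g n m * h0 + g n m * φ (n + 1) m * h_a n m + φ n (m + 1) * hstar n m +
      φ n m * (a n m * hstar n m + g n m * hc' n m)
  intro n m
  simp only [Lop]
  have d1 := hD n (m + 1)
  simp only [add_sub_cancel_right] at d1
  have d2 := hD n m
  have e2' := e2 n m
  rw [hgdef n m] at e2'
  linear_combination d1 + a n m * d2 + e2'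

/-- Base case: a factorizable operator (`h ≡ 0`) kills `β(n,m)·M(m)` for every `M`. -/
lemma baseSolve (a b c : ℤ → ℤ → ℂ) (ha : ∀ n m, a n m ≠ 0) (hb : ∀ n m, b n m ≠ 0)
    (hend : ∀ n m, hInv a b c n m = 0) :
    ∃ β : ℤ → ℤ → ℂ, (∀ n m, β n m ≠ 0) ∧
      ∀ M : ℤ → ℂ, ∀ n m, Lop a b c (fun n' m' => β n' m' * M m') n m = 0 := by
  have hc : ∀ n m, c n m = a n m * b n (m - 1) := by
    intro n m
    have h := hend n m
    simp only [hInv] at h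
    have h2 : c n m / (a n m * b n (m - 1)) = 1 := by linear_combination h
    field_simp [ha n m, hb n (m - 1)] at h2
    exact h2
  refine ⟨fun n m => Zprod (fun k => -(b k (m - 1))) n,
    fun n m => Zprod_ne_zero _ (fun k => neg_ne_zero.2 (hb k (m - 1))) n, ?_⟩
  intro M n m
  simp only [Lop]
  rw [Zprod_succ _ (fun k => neg_ne_zero.2 (hb k (m + 1 - 1))) n,
      Zprod_succ _ (fun k => neg_ne_zero.2 (hb k (m - 1))) n, hc n m]
  simp only [add_sub_cancel_right]
  ring

/-- if the Laplace series of `L_0` terminates at `L_r` (with `h_r ≡ 0` and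
`h_j` nowhere vanishing for `j < r`), then `L_0ψ = 0` admits solutions of the form
`ψ(n,m) = Σ_{i=0}^r B_i(n,m) M(m+i)` for every `M`, with `B_0`, `B_r` nonvanishing. -/
theorem stmt5 (r : ℕ) (hr : 1 ≤ r) (a b c : ℕ → ℤ → ℤ → ℂ)
    (ha : ∀ j ≤ r, ∀ n m, a j n m ≠ 0) (hb : ∀ j ≤ r, ∀ n m, b j n m ≠ 0)
    (hchain : ∀ j < r,
      IsLaplaceTransform (a (j + 1)) (b (j + 1)) (c (j + 1)) (a j) (b j) (c j))
    (hmid : ∀ j ≤ r - 1, ∀ n m, hInv (a j) (b j) (c j) n m ≠ 0)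
    (hend : ∀ n m, hInv (a r) (b r) (c r) n m = 0) :
    ∃ B : ℕ → ℤ → ℤ → ℂ,
      (∀ n m, B 0 n m ≠ 0) ∧ (∀ n m, B r n m ≠ 0) ∧
      ∀ M : ℤ → ℂ, ∀ n m : ℤ,
        Lop (a 0) (b 0) (c 0)
          (fun n' m' => ∑ i ∈ Finset.range (r + 1), B i n' m' * M (m' + (i : ℤ))) n m = 0 := by
  have key : ∀ t : ℕ, t ≤ r → ∃ C : ℕ → ℤ → ℤ → ℂ,
      (∀ n m, C 0 n m ≠ 0) ∧ (∀ n m, C t n m ≠ 0) ∧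
      (∀ i, t < i → ∀ n m, C i n m = 0) ∧
      ∀ M : ℤ → ℂ, ∀ n m : ℤ,
        Lop (a (r - t)) (b (r - t)) (c (r - t))
          (fun n' m' => ∑ i ∈ Finset.range (r + 1), C i n' m' * M (m' + (i : ℤ))) n m = 0 := by
    intro t
    induction t with
    | zero =>
      intro _
      obtain ⟨β, hβ, hsol⟩ := baseSolve (a r) (b r) (c r) (ha r le_rfl) (hb r le_rfl) hend
      refine ⟨fun i => if i = 0 then β else fun _ _ => 0, ?_, ?_, ?_, ?_⟩
      · intro n m; simpa using hβ n m
      · intro n m; simpa using hβ n m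
      · intro i hi n m; simp only [if_neg (show ¬ i = 0 by omega)]
      · intro M n m
        rw [Nat.sub_zero]
        rw [Lop_congr (a r) (b r) (c r) _ (fun n' m' => β n' m' * M m') ?_ n m]
        · exact hsol M n m
        · intro n' m'
          rw [Finset.sum_eq_single 0]
          · simp
          · intro i _ hi; simp [hi]
          · intro h; exact absurd (Finset.mem_range.2 (by omega)) h
    | succ t ih =>
      intro ht
      obtain ⟨C, hC0, hCt, hCz, hCsol⟩ := ih (by omega)
      set j := r - (t + 1) with hjdef
      have hj1 : j + 1 = r - t := by omega
      have hjr : j < r := by omega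
      have hjr' : j ≤ r := by omega
      obtain ⟨q, hT⟩ := hchain j hjr
      have hrel := extract (a (j + 1)) (b (j + 1)) (c (j + 1)) (a j) (b j) (c j) q
        (hb j hjr') hT
      have hg : ∀ n m, c j n m - a j n m * b j n (m - 1) ≠ 0 := by
        intro n m hzero
        apply hmid j (by omega) n m
        have hcc : c j n m = a j n m * b j n (m - 1) := by linear_combination hzero
        simp only [hInv, hcc]
        rw [div_self (mul_ne_zero (ha j hjr' n m) (hb j hjr' n (m - 1)))]
        ring
      refine ⟨fun i n m => -((if i = 0 then 0 else C (i - 1) n (m + 1)) +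
          a j n m * C i n m) / (c j n m - a j n m * b j n (m - 1)), ?_, ?_, ?_, ?_⟩
      · intro n m
        simp only [eq_self_iff_true, if_true, zero_add]
        exact div_ne_zero (neg_ne_zero.2 (mul_ne_zero (ha j hjr' n m) (hC0 n m))) (hg n m)
      · intro n m
        have h1 : C (t + 1) n m = 0 := hCz (t + 1) (by omega) n m
        simp only [h1, mul_zero, add_zero, Nat.add_sub_cancel,
          if_neg (Nat.succ_ne_zero t)]
        exact div_ne_zero (neg_ne_zero.2 (hCt n (m + 1))) (hg n m)
      · intro i hi n m
        have h1 : C i n m = 0 := hCz i (by omega) n m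
        have h2 : C (i - 1) n (m + 1) = 0 := hCz (i - 1) (by omega) n (m + 1)
        simp [h1, h2, if_neg (show i ≠ 0 by omega)]
      · intro M n m
        have hφ : ∀ n' m', Lop (a (j + 1)) (b (j + 1)) (c (j + 1))
            (fun n'' m'' => ∑ i ∈ Finset.range (r + 1), C i n'' m'' * M (m'' + (i : ℤ)))
            n' m' = 0 := by
          intro n' m'
          have h := hCsol M n' m'
          rw [← hj1] at h
          exact h
        have hL := inv_step (a (j + 1)) (b (j + 1)) (c (j + 1)) (a j) (b j) (c j) q
          (fun n' m' => c j n' m' - a j n' m' * b j n' (m' - 1))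
          (fun n'' m'' => ∑ i ∈ Finset.range (r + 1), C i n'' m'' * M (m'' + (i : ℤ)))
          (fun n' m' => -((∑ i ∈ Finset.range (r + 1), C i n' (m' + 1) * M ((m' + 1) + (i : ℤ)))
            + a j n' m' * ∑ i ∈ Finset.range (r + 1), C i n' m' * M (m' + (i : ℤ))) /
            (c j n' m' - a j n' m' * b j n' (m' - 1)))
          (fun n' m' => rfl) hg (fun n' m' => rfl)
          (fun n' m' => (hrel n' m').1) (fun n' m' => (hrel n' m').2.1)
          (fun n' m' => (hrel n' m').2.2.1) (fun n' m' => (hrel n' m').2.2.2) hφ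
        rw [Lop_congr (a j) (b j) (c j) _ _ ?_ n m]
        · exact hL n m
        · intro n' m'
          have shift : ∑ i ∈ Finset.range (r + 1), C i n' (m' + 1) * M ((m' + 1) + (i : ℤ))
              = ∑ i ∈ Finset.range (r + 1),
                  (if i = 0 then 0 else C (i - 1) n' (m' + 1)) * M (m' + (i : ℤ)) := by
            rw [Finset.sum_range_succ, Finset.sum_range_succ'
              (fun i => (if i = 0 then 0 else C (i - 1) n' (m' + 1)) * M (m' + (i : ℤ))) r]
            have hz : C r n' (m' + 1) = 0 := hCz r (by omega) n' (m' + 1)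
            simp only [hz, zero_mul, add_zero, Nat.succ_ne_zero, if_false,
              eq_self_iff_true, if_true, Nat.add_sub_cancel, zero_add]
            apply Finset.sum_congr rfl
            intro i _
            have harg : (m' + 1) + (i : ℤ) = m' + ((i + 1 : ℕ) : ℤ) := by push_cast; ring
            rw [harg]
          rw [shift, Finset.mul_sum, ← Finset.sum_add_distrib, neg_div, Finset.sum_div,
            ← Finset.sum_neg_distrib]
          apply Finset.sum_congr rfl
          intro i _
          ring
  obtain ⟨C, h0, ht, _, hsol⟩ := key r le_rfl
  refine ⟨C, h0, ht, ?_⟩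
  intro M n m
  have h := hsol M n m
  rwa [Nat.sub_self] at h
end
end

section
/- Let d ≥ 1, let A_0, …, A_{d−1} : ℤ × ℤ → ℂ, let ν_1, …, ν_d : ℤ → ℂ and μ_1, …, μ_d : ℤ → ℂ satisfy −Σ_{j=0}^{d−1} A_j(n,m)ν_i(n+j) = μ_i(m) for all (n,m) and all i = 1, …, d. Then for all N, M : ℤ → ℂ, the function ψ(n,m) = Σ_{j=0}^{d−1} A_j(n,m)N(n+j) + M(m) satisfies ψ(n,m)·Δ(n) = Δ₁(n,m) for all (n,m), where Δ(n) is the determinant of the d × d matrix with (i,j)-entry ν_i(n+j−1) (i, j = 1, …, d), and Δ₁(n,m) is the determinant of the (d+1) × (d+1) matrix whose first row is (M(m), N(n), N(n+1), …, N(n+d−1)) and whose (i+1)-th row is (μ_i(m), ν_i(n), ν_i(n+1), …, ν_i(n+d−1)) for i = 1, …, d. -/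
noncomputable section

/-- Cramer-type determinant identity: if
`-Σ_{j=0}^{d-1} A_j(n,m)ν_i(n+j) = μ_i(m)` for `i = 0,…,d-1`, then for all `N`, `M`
the function `ψ(n,m) = Σ_{j=0}^{d-1} A_j(n,m)N(n+j) + M(m)` satisfies
`ψ(n,m)·Δ(n) = Δ₁(n,m)` with the Casoratian `Δ` and the bordered determinant `Δ₁`. -/
theorem stmt10 (d : ℕ) (hd : 1 ≤ d)
    (A : ℕ → ℤ → ℤ → ℂ) (ν μ : ℕ → ℤ → ℂ)
    (hcompat : ∀ i < d, ∀ n m : ℤ,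
      -(∑ j ∈ Finset.range d, A j n m * ν i (n + (j : ℤ))) = μ i m) :
    ∀ N M : ℤ → ℂ, ∀ n m : ℤ,
      (∑ j ∈ Finset.range d, A j n m * N (n + (j : ℤ)) + M m) *
        Matrix.det (Matrix.of fun i j : Fin d => ν (i : ℕ) (n + ((j : ℕ) : ℤ))) =
      Matrix.det (Matrix.of fun i j : Fin (d + 1) =>
        if (i : ℕ) = 0 then
          (if (j : ℕ) = 0 then M m else N (n + (((j : ℕ) - 1 : ℕ) : ℤ)))
        else
          (if (j : ℕ) = 0 then μ ((i : ℕ) - 1) m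
           else ν ((i : ℕ) - 1) (n + (((j : ℕ) - 1 : ℕ) : ℤ)))) := by
  intro N M n m
  set ψ : ℂ := ∑ j ∈ Finset.range d, A j n m * N (n + (j : ℤ)) + M m with hψ
  -- B is the transpose of the bordered matrix
  set B : Matrix (Fin (d + 1)) (Fin (d + 1)) ℂ := Matrix.of fun i j : Fin (d + 1) =>
    if (j : ℕ) = 0 then
      (if (i : ℕ) = 0 then M m else N (n + (((i : ℕ) - 1 : ℕ) : ℤ)))
    else
      (if (i : ℕ) = 0 then μ ((j : ℕ) - 1) m
       else ν ((j : ℕ) - 1) (n + (((i : ℕ) - 1 : ℕ) : ℤ))) with hB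
  have hTrans : Matrix.det (Matrix.of fun i j : Fin (d + 1) =>
        if (i : ℕ) = 0 then
          (if (j : ℕ) = 0 then M m else N (n + (((j : ℕ) - 1 : ℕ) : ℤ)))
        else
          (if (j : ℕ) = 0 then μ ((i : ℕ) - 1) m
           else ν ((i : ℕ) - 1) (n + (((j : ℕ) - 1 : ℕ) : ℤ)))) = B.det := by
    rw [← Matrix.det_transpose B]
    congr 1
  rw [hTrans]
  -- row 0 of B as a linear combination
  have hrow0 : B 0 = (ψ • (Pi.single (0 : Fin (d + 1)) (1 : ℂ) : Fin (d + 1) → ℂ) +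
      ∑ j : Fin d, (-(A (j : ℕ) n m)) • B j.succ : Fin (d + 1) → ℂ) := by
    funext k
    simp only [Pi.add_apply, Pi.smul_apply, Finset.sum_apply, smul_eq_mul]
    by_cases hk : (k : ℕ) = 0
    · have hk0 : k = 0 := Fin.ext hk
      subst hk0
      simp only [hB, Matrix.of_apply, Fin.val_zero, Fin.val_succ,
        Nat.succ_sub_one, Nat.succ_ne_zero, if_false, ite_true, ite_false,
        eq_self_iff_true, if_true, Pi.single_eq_same, mul_one]
      have hsum : ∑ j : Fin d, -A (j : ℕ) n m * N (n + ((j : ℕ) : ℤ)) =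
          -(∑ j ∈ Finset.range d, A j n m * N (n + (j : ℤ))) := by
        rw [Finset.sum_range fun j => A j n m * N (n + (j : ℤ))]
        rw [← Finset.sum_neg_distrib]
        exact Finset.sum_congr rfl fun j _ => by ring
      rw [hsum, hψ]
      ring
    · have hk1 : k ≠ 0 := fun h => hk (by simp [h])
      rw [Pi.single_eq_of_ne hk1]
      simp only [hB, Matrix.of_apply, Fin.val_zero, hk, if_false, ite_true,
        ite_false, eq_self_iff_true, if_true, Fin.val_succ, Nat.succ_sub_one,
        Nat.succ_ne_zero, mul_zero, zero_add]
      have hklt : (k : ℕ) - 1 < d := by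
        have := k.isLt
        omega
      have := hcompat ((k : ℕ) - 1) hklt n m
      rw [← this]
      rw [Finset.sum_range fun j => A j n m * ν ((k : ℕ) - 1) (n + (j : ℤ))]
      rw [← Finset.sum_neg_distrib]
      have : ∀ j : Fin d, -A (j : ℕ) n m * ν ((k : ℕ) - 1) (n + ((j : ℕ) : ℤ)) =
          -(A (j : ℕ) n m * ν ((k : ℕ) - 1) (n + ((j : ℕ) : ℤ))) := fun j => by ring
      rw [Finset.sum_congr rfl fun j _ => this j]
  have hupdate : B = B.updateRow 0 (ψ • (Pi.single (0 : Fin (d + 1)) (1 : ℂ) : Fin (d + 1) → ℂ) +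
      ∑ j : Fin d, (-(A (j : ℕ) n m)) • B j.succ) := by
    rw [← hrow0, Matrix.updateRow_eq_self]
  -- the sum of other rows contributes zero
  have hzero : ∀ s : Finset (Fin d),
      (B.updateRow 0 (∑ j ∈ s, (-(A (j : ℕ) n m)) • B j.succ)).det = 0 := by
    intro s
    induction s using Finset.induction with
    | empty =>
      apply Matrix.det_eq_zero_of_row_eq_zero 0
      intro j
      simp
    | @insert a t ha ih =>
      rw [Finset.sum_insert ha, Matrix.det_updateRow_add, Matrix.det_updateRow_smul, ih,
        add_zero]
      have hdup : (B.updateRow 0 (B a.succ)).det = 0 := by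
        apply Matrix.det_zero_of_row_eq (i := (0 : Fin (d + 1))) (j := a.succ)
          (Fin.succ_ne_zero a).symm
        rw [Matrix.updateRow_self, Matrix.updateRow_ne (Fin.succ_ne_zero a)]
      rw [hdup, mul_zero]
  -- det of the matrix with row 0 = e₀
  have hminor : (B.updateRow 0 ((Pi.single (0 : Fin (d + 1)) (1 : ℂ) : Fin (d + 1) → ℂ))).det =
      Matrix.det (Matrix.of fun i j : Fin d => ν (i : ℕ) (n + ((j : ℕ) : ℤ))) := by
    rw [Matrix.det_succ_row_zero]
    have hcollapse : ∀ j : Fin (d + 1), j ≠ 0 →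
        (-1 : ℂ) ^ (j : ℕ) * (B.updateRow 0 ((Pi.single (0 : Fin (d + 1)) (1 : ℂ) : Fin (d + 1) → ℂ))) 0 j *
          ((B.updateRow 0 ((Pi.single (0 : Fin (d + 1)) (1 : ℂ) : Fin (d + 1) → ℂ))).submatrix
            Fin.succ j.succAbove).det = 0 := by
      intro j hj
      rw [Matrix.updateRow_self, Pi.single_eq_of_ne hj]
      ring
    rw [Finset.sum_eq_single 0 (fun j _ hj => hcollapse j hj) (by simp)]
    rw [Matrix.updateRow_self, Pi.single_eq_same]
    simp only [Fin.val_zero, pow_zero, one_mul, Fin.succAbove_zero]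
    have hsub : ((B.updateRow 0 ((Pi.single (0 : Fin (d + 1)) (1 : ℂ) : Fin (d + 1) → ℂ))).submatrix
        Fin.succ Fin.succ) =
        Matrix.transpose (Matrix.of fun i j : Fin d => ν (i : ℕ) (n + ((j : ℕ) : ℤ))) := by
      ext i j
      rw [Matrix.submatrix_apply, Matrix.updateRow_ne (Fin.succ_ne_zero _)]
      simp [hB]
    rw [hsub, Matrix.det_transpose]
  calc ψ * Matrix.det (Matrix.of fun i j : Fin d => ν (i : ℕ) (n + ((j : ℕ) : ℤ)))
      = ψ * (B.updateRow 0 ((Pi.single (0 : Fin (d + 1)) (1 : ℂ) : Fin (d + 1) → ℂ))).det +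
        (B.updateRow 0 (∑ j : Fin d, (-(A (j : ℕ) n m)) • B j.succ)).det := by
        rw [hminor, hzero, add_zero]
    _ = B.det := by
        conv_rhs => rw [hupdate, Matrix.det_updateRow_add, Matrix.det_updateRow_smul]
end
end

section
/- Let d ≥ 1, let ν_1, …, ν_d : ℤ → ℂ be such that the Casoratian det[ν_i(n+j)]_{i=1..d, j=0..d−1} is nonzero for every n ∈ ℤ, and let A_0, …, A_{d−1} : ℤ × ℤ → ℂ with A_{d−1} nowhere vanishing be such that for each i = 1, …, d the expression Σ_{j=0}^{d−1} A_j(n,m)ν_i(n+j) is independent of n (i.e. defines a function of m alone). Then there exists γ : ℤ × ℤ → ℂ such that for every N : ℤ → ℂ and every M : ℤ → ℂ the function ψ(n,m) = Σ_{j=0}^{d−1} A_j(n,m)N(n+j) + M(m) satisfies the second-order hyperbolic difference equation ψ(n+1,m+1) + γ(n,m)ψ(n+1,m) − ψ(n,m+1) − γ(n,m)ψ(n,m) = 0 for all (n,m); this equation is L_rψ = 0 for the hyperbolic difference operator L_r with coefficients a = γ, b = −1, c = −γ, whose Laplace invariant h vanishes identically. -/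
noncomputable section

/-- if the Casoratian of `ν_1,…,ν_d` never vanishes, `A_{d-1}` is nowhere
vanishing, and each `Σ_j A_j(n,m)ν_i(n+j)` is independent of `n`, then there is `γ`
(nowhere vanishing) such that every `ψ(n,m) = Σ_j A_j(n,m)N(n+j) + M(m)` satisfies the
second-order hyperbolic equation `L_rψ = 0` with coefficients `a = γ`, `b = -1`,
`c = -γ`, whose Laplace invariant `h` vanishes identically. -/
theorem stmt11 (d : ℕ) (hd : 1 ≤ d) (ν : ℕ → ℤ → ℂ)
    (hcas : ∀ n : ℤ,
      Matrix.det (Matrix.of fun i j : Fin d => ν (i : ℕ) (n + ((j : ℕ) : ℤ))) ≠ 0)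
    (A : ℕ → ℤ → ℤ → ℂ) (hAd : ∀ n m, A (d - 1) n m ≠ 0)
    (hindep : ∀ i < d, ∃ μi : ℤ → ℂ, ∀ n m : ℤ,
      ∑ j ∈ Finset.range d, A j n m * ν i (n + (j : ℤ)) = μi m) :
    ∃ γ : ℤ → ℤ → ℂ, (∀ n m, γ n m ≠ 0) ∧
      (∀ N M : ℤ → ℂ, ∀ n m : ℤ,
        Lop γ (fun _ _ => (-1 : ℂ)) (fun n' m' => -γ n' m')
          (fun n' m' => ∑ j ∈ Finset.range d, A j n' m' * N (n' + (j : ℤ)) + M m') n m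
          = 0) ∧
      (∀ n m : ℤ, hInv γ (fun _ _ => (-1 : ℂ)) (fun n' m' => -γ n' m') n m = 0) := by
  classical
  have hd0 : d ≠ 0 := by omega
  -- the "n-difference" functional
  set E : (ℤ → ℂ) → ℤ → ℤ → ℂ := fun N n m =>
    (∑ j ∈ Finset.range d, A j (n + 1) m * N (n + 1 + (j : ℤ)))
      - ∑ j ∈ Finset.range d, A j n m * N (n + (j : ℤ)) with hE
  -- its coefficients on the window N(n),…,N(n+d)
  set B : ℤ → ℤ → ℕ → ℂ := fun n m j =>
    (if j = 0 then 0 else A (j - 1) (n + 1) m) - (if j = d then 0 else A j n m) with hB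
  have hBd : ∀ n m, B n m d = A (d - 1) (n + 1) m := by
    intro n m; simp [hB, hd0]
  have hEexp : ∀ (N : ℤ → ℂ) (n m : ℤ),
      E N n m = ∑ j ∈ Finset.range (d + 1), B n m j * N (n + (j : ℤ)) := by
    intro N n m
    have h1 : ∑ j ∈ Finset.range (d + 1),
          (if j = 0 then (0 : ℂ) else A (j - 1) (n + 1) m) * N (n + (j : ℤ))
        = ∑ j ∈ Finset.range d, A j (n + 1) m * N (n + 1 + (j : ℤ)) := by
      rw [Finset.sum_range_succ', if_pos rfl, zero_mul, add_zero]
      apply Finset.sum_congr rfl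
      intro j _
      rw [if_neg (Nat.succ_ne_zero j), Nat.add_sub_cancel]
      congr 2
      push_cast; ring
    have h2 : ∑ j ∈ Finset.range (d + 1),
          (if j = d then (0 : ℂ) else A j n m) * N (n + (j : ℤ))
        = ∑ j ∈ Finset.range d, A j n m * N (n + (j : ℤ)) := by
      rw [Finset.sum_range_succ, if_pos rfl, zero_mul, add_zero]
      exact Finset.sum_congr rfl fun j hj => by
        rw [if_neg (Nat.ne_of_lt (Finset.mem_range.mp hj))]
    simp only [hE]
    rw [← h1, ← h2, ← Finset.sum_sub_distrib]
    exact Finset.sum_congr rfl fun j _ => by simp [hB, sub_mul]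
  have hEν : ∀ i < d, ∀ n m : ℤ, E (ν i) n m = 0 := by
    intro i hi n m
    obtain ⟨μ, hμ⟩ := hindep i hi
    have h1 := hμ (n + 1) m
    have h2 := hμ n m
    simp only [hE]
    rw [h1, h2, sub_self]
  have hBν : ∀ i < d, ∀ n m : ℤ,
      ∑ j ∈ Finset.range (d + 1), B n m j * ν i (n + (j : ℤ)) = 0 := by
    intro i hi n m
    rw [← hEexp]; exact hEν i hi n m
  -- the key cross identity
  have hcross : ∀ (n m m' : ℤ) (N : ℤ → ℂ),
      A (d - 1) (n + 1) m' * E N n m = A (d - 1) (n + 1) m * E N n m' := by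
    intro n m m' N
    set x : Fin d → ℂ := fun j =>
      A (d - 1) (n + 1) m' * B n m (j : ℕ) - A (d - 1) (n + 1) m * B n m' (j : ℕ) with hx
    have hg : ∀ i < d, ∀ t : ℤ, ∑ j ∈ Finset.range d,
        ν i (n + (j : ℤ)) * (A (d - 1) (n + 1) m' * B n t j) =
        - (ν i (n + (d : ℤ)) * (A (d - 1) (n + 1) m' * A (d - 1) (n + 1) t))+
          A (d - 1) (n + 1) m' *
            ∑ j ∈ Finset.range (d + 1), B n t j * ν i (n + (j : ℤ)) := by
      intro i hi t
      rw [Finset.mul_sum, Finset.sum_range_succ, hBd]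
      rw [Finset.sum_congr rfl (fun j _ => by ring :
        ∀ j ∈ Finset.range d, ν i (n + (j : ℤ)) * (A (d - 1) (n + 1) m' * B n t j)
          = A (d - 1) (n + 1) m' * (B n t j * ν i (n + (j : ℤ))))]
      ring
    have hmul : (Matrix.of fun i j : Fin d => ν (i : ℕ) (n + ((j : ℕ) : ℤ))).mulVec x
        = 0 := by
      funext i
      have hIlt : (i : ℕ) < d := i.isLt
      simp only [Matrix.mulVec, dotProduct, Matrix.of_apply, Pi.zero_apply]
      have heq : ∑ j : Fin d, ν (i : ℕ) (n + ((j : ℕ) : ℤ)) * x j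
          = ∑ k ∈ Finset.range d, (fun k : ℕ => ν (i : ℕ) (n + (k : ℤ)) *
              (A (d - 1) (n + 1) m' * B n m k - A (d - 1) (n + 1) m * B n m' k)) k := by
        refine (Finset.sum_congr rfl fun j _ => rfl).trans ?_
        exact Fin.sum_univ_eq_sum_range (fun k : ℕ => ν (i : ℕ) (n + (k : ℤ)) *
          (A (d - 1) (n + 1) m' * B n m k - A (d - 1) (n + 1) m * B n m' k)) d
      rw [heq]
      simp only []
      have expand : ∀ k ∈ Finset.range d,
          ν (i : ℕ) (n + (k : ℤ)) *
            (A (d - 1) (n + 1) m' * B n m k - A (d - 1) (n + 1) m * B n m' k)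
          = ν (i : ℕ) (n + (k : ℤ)) * (A (d - 1) (n + 1) m' * B n m k)
            - ν (i : ℕ) (n + (k : ℤ)) * (A (d - 1) (n + 1) m * B n m' k) := by
        intro k _; ring
      rw [Finset.sum_congr rfl expand, Finset.sum_sub_distrib,
        hg (i : ℕ) hIlt m, hBν (i : ℕ) hIlt n m]
      have hg2 := hg (i : ℕ) hIlt m'
      -- need the symmetric version with m and m' swapped in the prefactor
      have hg2' : ∑ j ∈ Finset.range d,
          ν (i : ℕ) (n + (j : ℤ)) * (A (d - 1) (n + 1) m * B n m' j) =
          - (ν (i : ℕ) (n + (d : ℤ)) * (A (d - 1) (n + 1) m * A (d - 1) (n + 1) m')) +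
            A (d - 1) (n + 1) m *
              ∑ j ∈ Finset.range (d + 1), B n m' j * ν (i : ℕ) (n + (j : ℤ)) := by
        rw [Finset.mul_sum, Finset.sum_range_succ, hBd]
        rw [Finset.sum_congr rfl (fun j _ => by ring :
          ∀ j ∈ Finset.range d, ν (i : ℕ) (n + (j : ℤ)) * (A (d - 1) (n + 1) m * B n m' j)
            = A (d - 1) (n + 1) m * (B n m' j * ν (i : ℕ) (n + (j : ℤ))))]
        ring
      rw [hg2', hBν (i : ℕ) hIlt n m']
      ring
    have hx0 : x = 0 := by
      have hu : IsUnit (Matrix.of fun i j : Fin d => ν (i : ℕ) (n + ((j : ℕ) : ℤ))) := by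
        rw [Matrix.isUnit_iff_isUnit_det]
        exact isUnit_iff_ne_zero.mpr (hcas n)
      have hinj := Matrix.mulVec_injective_iff_isUnit.mpr hu
      apply hinj
      rw [hmul, Matrix.mulVec_zero]
    -- now conclude
    have hxj : ∀ j < d, A (d - 1) (n + 1) m' * B n m j - A (d - 1) (n + 1) m * B n m' j
        = 0 := by
      intro j hj
      have := congrFun hx0 ⟨j, hj⟩
      simpa [hx] using this
    rw [hEexp, hEexp, Finset.mul_sum, Finset.mul_sum, ← sub_eq_zero,
      ← Finset.sum_sub_distrib]
    apply Finset.sum_eq_zero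
    intro j hj
    by_cases hjd : j = d
    · subst hjd
      rw [hBd, hBd]; ring
    · have hjlt : j < d := by
        have := Finset.mem_range.mp hj; omega
      linear_combination N (n + (j : ℤ)) * hxj j hjlt
  -- the coefficient γ
  refine ⟨fun n m => -A (d - 1) (n + 1) (m + 1) / A (d - 1) (n + 1) m, ?_, ?_, ?_⟩
  · intro n m
    exact div_ne_zero (neg_ne_zero.mpr (hAd _ _)) (hAd _ _)
  · intro N M n m
    have key := hcross n m (m + 1) N
    have hA0 : A (d - 1) (n + 1) m ≠ 0 := hAd _ _
    have hgoal : Lop (fun n m => -A (d - 1) (n + 1) (m + 1) / A (d - 1) (n + 1) m)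
        (fun _ _ => (-1 : ℂ))
        (fun n' m' => -(-A (d - 1) (n' + 1) (m' + 1) / A (d - 1) (n' + 1) m'))
        (fun n' m' => ∑ j ∈ Finset.range d, A j n' m' * N (n' + (j : ℤ)) + M m') n m
        = E N n (m + 1)
          + (-A (d - 1) (n + 1) (m + 1) / A (d - 1) (n + 1) m) * E N n m := by
      simp only [Lop, hE]
      ring
    rw [hgoal]
    field_simp
    linear_combination -key
  · intro n m
    have hA0 : A (d - 1) (n + 1) m ≠ 0 := hAd _ _
    have hA1 : A (d - 1) (n + 1) (m + 1) ≠ 0 := hAd _ _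
    simp only [hInv]
    rw [sub_eq_zero]
    field_simp
end
end

section
/- Let L_0 be a hyperbolic difference operator with coefficients a, b, c, let s, r ≥ 0, and let A_0, …, A_s, B_0, …, B_r : ℤ × ℤ → ℂ be such that for every N, M : ℤ → ℂ the function ψ(n,m) = Σ_{i=0}^{s} A_i(n,m)N(n+i) + Σ_{j=0}^{r} B_j(n,m)M(m+j) satisfies L_0ψ = 0. If A_s and B_r are nowhere vanishing and Σ_{i=0}^{s} A_i(n,m) ≠ 0 for all (n,m), then the coefficients of L_0 are given by: a(n,m) = −A_s(n+1,m+1)/A_s(n+1,m), b(n,m) = −B_r(n+1,m+1)/B_r(n,m+1), and c(n,m) = −(Σ_{i=0}^{s} A_i(n+1,m+1) + a(n,m)·Σ_{i=0}^{s} A_i(n+1,m) + b(n,m)·Σ_{i=0}^{s} A_i(n,m+1)) / Σ_{i=0}^{s} A_i(n,m). -/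
noncomputable section

/-- recovery of the coefficients of `L_0` from the coefficients `A_i`,
`B_j` of its general solution. -/
theorem stmt12 (a b c : ℤ → ℤ → ℂ)
    (ha : ∀ n m, a n m ≠ 0) (hb : ∀ n m, b n m ≠ 0)
    (s r : ℕ) (A B : ℕ → ℤ → ℤ → ℂ)
    (hsol : ∀ N M : ℤ → ℂ, ∀ n m : ℤ,
      Lop a b c
        (fun n' m' => ∑ i ∈ Finset.range (s + 1), A i n' m' * N (n' + (i : ℤ))
          + ∑ j ∈ Finset.range (r + 1), B j n' m' * M (m' + (j : ℤ))) n m = 0)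
    (hAs : ∀ n m, A s n m ≠ 0) (hBr : ∀ n m, B r n m ≠ 0)
    (hsum : ∀ n m : ℤ, (∑ i ∈ Finset.range (s + 1), A i n m) ≠ 0) :
    ∀ n m : ℤ,
      a n m = -(A s (n + 1) (m + 1) / A s (n + 1) m) ∧
      b n m = -(B r (n + 1) (m + 1) / B r n (m + 1)) ∧
      c n m = -(((∑ i ∈ Finset.range (s + 1), A i (n + 1) (m + 1))
          + a n m * (∑ i ∈ Finset.range (s + 1), A i (n + 1) m)
          + b n m * (∑ i ∈ Finset.range (s + 1), A i n (m + 1)))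
        / (∑ i ∈ Finset.range (s + 1), A i n m)) := by

  intro n m
  -- Part a: use delta function N at n+1+s, M = 0
  have hA : a n m = -(A s (n + 1) (m + 1) / A s (n + 1) m) := by
    have h := hsol (fun x => if x = n + 1 + (s : ℤ) then 1 else 0) (fun _ => 0) n m
    simp only [Lop, mul_zero, Finset.sum_const_zero, add_zero] at h
    have key1 : ∀ m' : ℤ, (∑ i ∈ Finset.range (s+1), A i (n+1) m' *
        (if (n+1) + (i:ℤ) = n + 1 + (s:ℤ) then (1:ℂ) else 0)) = A s (n+1) m' := by
      intro m'
      rw [Finset.sum_eq_single s]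
      · simp
      · intro i hi hne
        have hc : ¬((n+1) + (i:ℤ) = n + 1 + (s:ℤ)) := by
          intro hh
          apply hne
          exact_mod_cast (by linarith : (i:ℤ) = s)
        simp [hc]
      · intro hh; exact absurd (Finset.self_mem_range_succ s) hh
    have key0 : ∀ m' : ℤ, (∑ i ∈ Finset.range (s+1), A i n m' *
        (if n + (i:ℤ) = n + 1 + (s:ℤ) then (1:ℂ) else 0)) = 0 := by
      intro m'
      apply Finset.sum_eq_zero
      intro i hi
      have hc : ¬(n + (i:ℤ) = n + 1 + (s:ℤ)) := by
        intro hh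
        have : (i:ℤ) = (s:ℤ) + 1 := by linarith
        have : i = s + 1 := by exact_mod_cast this
        simp [Finset.mem_range] at hi
        omega
      simp [hc]
    rw [key1, key1, key0, key0] at h
    have h1 := hAs (n + 1) m
    field_simp
    linear_combination h
  refine ⟨hA, ?_, ?_⟩
  -- Part b: use delta function M at m+1+r, N = 0
  · have h := hsol (fun _ => 0) (fun x => if x = m + 1 + (r : ℤ) then 1 else 0) n m
    simp only [Lop, mul_zero, Finset.sum_const_zero, zero_add] at h
    have key1 : ∀ n' : ℤ, (∑ j ∈ Finset.range (r+1), B j n' (m+1) *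
        (if (m+1) + (j:ℤ) = m + 1 + (r:ℤ) then (1:ℂ) else 0)) = B r n' (m+1) := by
      intro n'
      rw [Finset.sum_eq_single r]
      · simp
      · intro j hj hne
        have hc : ¬((m+1) + (j:ℤ) = m + 1 + (r:ℤ)) := by
          intro hh
          apply hne
          exact_mod_cast (by linarith : (j:ℤ) = r)
        simp [hc]
      · intro hh; exact absurd (Finset.self_mem_range_succ r) hh
    have key0 : ∀ n' : ℤ, (∑ j ∈ Finset.range (r+1), B j n' m *
        (if m + (j:ℤ) = m + 1 + (r:ℤ) then (1:ℂ) else 0)) = 0 := by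
      intro n'
      apply Finset.sum_eq_zero
      intro j hj
      have hc : ¬(m + (j:ℤ) = m + 1 + (r:ℤ)) := by
        intro hh
        have : (j:ℤ) = (r:ℤ) + 1 := by linarith
        have : j = r + 1 := by exact_mod_cast this
        simp [Finset.mem_range] at hj
        omega
      simp [hc]
    rw [key1, key1, key0, key0] at h
    have h1 := hBr n (m + 1)
    field_simp
    linear_combination h
  -- Part c: use N = 1, M = 0
  · have h := hsol (fun _ => 1) (fun _ => 0) n m
    simp only [Lop, mul_zero, mul_one, Finset.sum_const_zero, add_zero] at h
    have h1 := hsum n m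
    field_simp
    linear_combination h
end
end

section
/- Let L be the hyperbolic differential–difference operator with smooth coefficients a, b, c (a nowhere vanishing) and Laplace invariants k_n, h_n. Suppose h_n(x) ≠ 0 for all n, x, and let ψ : ℤ → ℝ → ℂ be a family of differentiable functions with Lψ = 0 (i.e. (Lψ)_n(x) = 0 for all n, x). Then for all n, x: ψ_n(x) = −(a_n(x)·h_n(x))⁻¹ · (φ_{n+1}(x) + a_n(x)φ_n(x)), where φ_n(x) = ψ_n′(x) + b_{n−1}(x)ψ_n(x). (The semi-discrete Laplace transformation ψ ↦ φ is inverted on the kernel of L by the operator −(a_n h_n)⁻¹(T_n + a_n).) -/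
noncomputable section

/-- The hyperbolic differential–difference operator with coefficients `a`, `b`, `c`:
`(Lψ)_n(x) = ψ'_{n+1}(x) + a_n(x)ψ'_n(x) + b_n(x)ψ_{n+1}(x) + c_n(x)ψ_n(x)`. -/
def SLop (a b c : ℤ → ℝ → ℂ) (ψ : ℤ → ℝ → ℂ) : ℤ → ℝ → ℂ :=
  fun n x => deriv (ψ (n + 1)) x + a n x * deriv (ψ n) x + b n x * ψ (n + 1) x
    + c n x * ψ n x

/-- The semi-discrete Laplace invariant `k_n = c_n/a_n - a'_n/a_n - b_n`. -/
def skInv (a b c : ℤ → ℝ → ℂ) : ℤ → ℝ → ℂ :=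
  fun n x => c n x / a n x - deriv (a n) x / a n x - b n x

/-- The semi-discrete Laplace invariant `h_n = c_n/a_n - b_{n-1}`. -/
def shInv (a b c : ℤ → ℝ → ℂ) : ℤ → ℝ → ℂ :=
  fun n x => c n x / a n x - b (n - 1) x

/-- The operator `(Dψ)_n = ψ_n' + b_{n-1}ψ_n`. -/
def SDop (b : ℤ → ℝ → ℂ) (ψ : ℤ → ℝ → ℂ) : ℤ → ℝ → ℂ :=
  fun n x => deriv (ψ n) x + b (n - 1) x * ψ n x

/-- `L̂` (coefficients `a' b' c'`) is a semi-discrete Laplace transform of `L`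
(coefficients `a b c`). -/
def IsSDLaplaceTransform (a' b' c' a b c : ℤ → ℝ → ℂ) : Prop :=
  a' = a ∧ ∃ q : ℤ → ℝ → ℂ, ∀ ψ : ℤ → ℝ → ℂ, (∀ n, ContDiff ℝ (⊤ : ℕ∞) (ψ n)) → ∀ n x,
    SLop a' b' c' (SDop b ψ) n x = deriv (SLop a b c ψ n) x + q n x * SLop a b c ψ n x

/-- on the kernel of `L`, the semi-discrete Laplace transformation
`ψ ↦ φ = Dψ` is inverted by the operator `-(a_n h_n)⁻¹ (T_n + a_n)`. -/
theorem stmt16 (a b c : ℤ → ℝ → ℂ)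
    (haS : ∀ n, ContDiff ℝ (⊤ : ℕ∞) (a n)) (hbS : ∀ n, ContDiff ℝ (⊤ : ℕ∞) (b n))
    (hcS : ∀ n, ContDiff ℝ (⊤ : ℕ∞) (c n)) (ha : ∀ n x, a n x ≠ 0)
    (hh : ∀ n x, shInv a b c n x ≠ 0)
    (ψ : ℤ → ℝ → ℂ) (hψ : ∀ n, Differentiable ℝ (ψ n))
    (hker : ∀ n x, SLop a b c ψ n x = 0) :
    ∀ (n : ℤ) (x : ℝ),
      ψ n x = -(a n x * shInv a b c n x)⁻¹ *
        (SDop b ψ (n + 1) x + a n x * SDop b ψ n x) := by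
  intro n x
  have hk := hker n x
  have hhx := hh n x
  have hax := ha n x
  simp only [SLop] at hk
  simp only [SDop, shInv, add_sub_cancel_right] at *
  field_simp
  field_simp at hhx
  have hD : c n x - a n x * b (n - 1) x ≠ 0 := fun h => hhx (by rw [h, zero_div])
  rw [neg_div', eq_div_iff hD]
  linear_combination hk
end
end

section
/- Let L_{j−1}, L_j, L_{j+1} be hyperbolic differential–difference operators with smooth coefficients (each a-coefficient nowhere vanishing) such that L_j is a semi-discrete Laplace transform of L_{j−1} and L_{j+1} is a semi-discrete Laplace transform of L_j, with Laplace invariants k_{j−1,n}, h_{j−1,n}, k_{j,n}, h_{j,n}, k_{j+1,n}, h_{j+1,n}. Then k_{j+1,n}(x) = h_{j,n}(x) and k_{j,n}(x) = h_{j−1,n}(x) for all n, x, and the semi-discrete two-dimensional Toda lattice identity holds: h_{j,n}′(x)·h_{j,n+1}(x) − h_{j,n+1}′(x)·h_{j,n}(x) = h_{j,n}(x)·h_{j,n+1}(x)·(h_{j+1,n+1}(x) − h_{j,n+1}(x) − h_{j,n}(x) + h_{j−1,n}(x)) for all n, x. -/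
noncomputable section

lemma lincomp (x₀ x : ℝ) : HasDerivAt (fun t : ℝ => (t : ℂ) - (x₀ : ℂ)) 1 x := by
  simpa using (Complex.ofRealCLM.hasDerivAt (x := x)).sub_const (x₀ : ℂ)

lemma dlin (x₀ x : ℝ) : deriv (fun t : ℝ => (t : ℂ) - (x₀ : ℂ)) x = 1 :=
  (lincomp x₀ x).deriv

lemma dzero (x : ℝ) : deriv (0 : ℝ → ℂ) x = 0 := by
  simp [Pi.zero_def]

lemma derivAux (g f : ℝ → ℂ) (x₀ : ℝ) (hg : DifferentiableAt ℝ g x₀)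
    (hf : DifferentiableAt ℝ f x₀) :
    deriv (fun x => g x + f x * ((x : ℂ) - (x₀ : ℂ))) x₀ = deriv g x₀ + f x₀ := by
  have h := hg.hasDerivAt.add (hf.hasDerivAt.mul (lincomp x₀ x₀))
  rw [show (fun x => g x + f x * ((x : ℂ) - (x₀ : ℂ))) = g + f * (fun t : ℝ => (t : ℂ) - (x₀ : ℂ)) from rfl, h.deriv]
  simp

lemma extract_s17 (a b c b' c' q : ℤ → ℝ → ℂ)
    (haS : ∀ n, ContDiff ℝ (⊤ : ℕ∞) (a n)) (hbS : ∀ n, ContDiff ℝ (⊤ : ℕ∞) (b n))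
    (hcS : ∀ n, ContDiff ℝ (⊤ : ℕ∞) (c n))
    (hq : ∀ ψ : ℤ → ℝ → ℂ, (∀ n, ContDiff ℝ (⊤ : ℕ∞) (ψ n)) → ∀ n x,
      SLop a b' c' (SDop b ψ) n x = deriv (SLop a b c ψ n) x + q n x * SLop a b c ψ n x) :
    (∀ n x, c' n x = deriv (a n) x + c n x + b' n x * a n x - a n x * b (n-1) x) ∧
    (∀ n x, deriv (c n) x + b' n x * c n x
        = a n x * deriv (b (n-1)) x + c' n x * b (n-1) x) := by
  have da : ∀ n x, DifferentiableAt ℝ (a n) x := fun n x => ((haS n).differentiable (by simp)) x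
  have db : ∀ n x, DifferentiableAt ℝ (b n) x := fun n x => ((hbS n).differentiable (by simp)) x
  have dc : ∀ n x, DifferentiableAt ℝ (c n) x := fun n x => ((hcS n).differentiable (by simp)) x
  -- Step 1: q = b'
  have hqb : ∀ n x, q n x = b' n x := by
    intro n x₀
    set ψ : ℤ → ℝ → ℂ := fun m => if m = n + 1 then (fun x : ℝ => (x:ℂ) - (x₀:ℂ)) else 0
      with hψ
    have hψS : ∀ m, ContDiff ℝ (⊤ : ℕ∞) (ψ m) := by
      intro m; rw [hψ]; dsimp only
      split
      · exact (Complex.ofRealCLM.contDiff).sub contDiff_const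
      · exact contDiff_const
    have e := hq ψ hψS n x₀
    have hψ1 : ψ (n + 1) = fun x : ℝ => (x:ℂ) - (x₀:ℂ) := if_pos rfl
    have hψn : ψ n = 0 := if_neg (by omega)
    have hψ2 : ψ (n + 1 + 1) = 0 := if_neg (by omega)
    have hS1 : SDop b ψ (n + 1) = fun x => 1 + b n x * ((x:ℂ) - (x₀:ℂ)) := by
      funext x
      simp [SDop, hψ1, dlin, add_sub_cancel_right]
    have hSn : SDop b ψ n = fun _ => 0 := by
      funext x; simp [SDop, hψn, dzero]
    have hL : SLop a b c ψ n = fun x => 1 + b n x * ((x:ℂ) - (x₀:ℂ)) := by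
      funext x
      simp [SLop, hψ1, hψ2, hψn, dlin, dzero]
    have hd1 : deriv (fun x => 1 + b n x * ((x:ℂ) - (x₀:ℂ))) x₀ = b n x₀ := by
      have := derivAux (fun _ => 1) (b n) x₀ (differentiableAt_const _) (db n x₀)
      simpa using this
    rw [hL, hd1] at e
    simp only [SLop, hS1, hSn] at e
    rw [hd1] at e
    simp at e
    exact e.symm
  -- Step 2: relation (A)
  have hA : ∀ n x, c' n x = deriv (a n) x + c n x + b' n x * a n x - a n x * b (n-1) x := by
    intro n x₀
    set ψ : ℤ → ℝ → ℂ := fun m => if m = n then (fun x : ℝ => (x:ℂ) - (x₀:ℂ)) else 0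
      with hψ
    have hψS : ∀ m, ContDiff ℝ (⊤ : ℕ∞) (ψ m) := by
      intro m; rw [hψ]; dsimp only
      split
      · exact (Complex.ofRealCLM.contDiff).sub contDiff_const
      · exact contDiff_const
    have e := hq ψ hψS n x₀
    have hψn : ψ n = fun x : ℝ => (x:ℂ) - (x₀:ℂ) := if_pos rfl
    have hψ1 : ψ (n + 1) = 0 := if_neg (by omega)
    have hSn : SDop b ψ n = fun x => 1 + b (n-1) x * ((x:ℂ) - (x₀:ℂ)) := by
      funext x
      simp [SDop, hψn, dlin]
    have hS1 : SDop b ψ (n + 1) = fun _ => 0 := by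
      funext x; simp [SDop, hψ1, dzero]
    have hL : SLop a b c ψ n = fun x => a n x + c n x * ((x:ℂ) - (x₀:ℂ)) := by
      funext x
      simp [SLop, hψ1, hψn, dlin, dzero]
    have hdn : deriv (fun x => 1 + b (n-1) x * ((x:ℂ) - (x₀:ℂ))) x₀ = b (n-1) x₀ := by
      have := derivAux (fun _ => 1) (b (n-1)) x₀ (differentiableAt_const _) (db (n-1) x₀)
      simpa using this
    have hdL : deriv (fun x => a n x + c n x * ((x:ℂ) - (x₀:ℂ))) x₀
        = deriv (a n) x₀ + c n x₀ := derivAux (a n) (c n) x₀ (da n x₀) (dc n x₀)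
    rw [hL, hdL] at e
    simp only [SLop, hSn, hS1] at e
    rw [hdn] at e
    simp [hqb] at e
    linear_combination e
  refine ⟨hA, ?_⟩
  -- Step 3: relation (B)
  intro n x₀
  set ψ : ℤ → ℝ → ℂ := fun m => if m = n then (fun _ : ℝ => (1:ℂ)) else 0 with hψ
  have hψS : ∀ m, ContDiff ℝ (⊤ : ℕ∞) (ψ m) := by
    intro m; rw [hψ]; dsimp only
    split
    · exact contDiff_const
    · exact contDiff_const
  have e := hq ψ hψS n x₀
  have hψn : ψ n = fun _ : ℝ => (1:ℂ) := if_pos rfl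
  have hψ1 : ψ (n + 1) = 0 := if_neg (by omega)
  have hSn : SDop b ψ n = fun x => b (n-1) x := by
    funext x; simp [SDop, hψn]
  have hS1 : SDop b ψ (n + 1) = fun _ => 0 := by
    funext x; simp [SDop, hψ1, dzero]
  have hL : SLop a b c ψ n = fun x => c n x := by
    funext x; simp [SLop, hψ1, hψn, dzero]
  rw [hL] at e
  simp only [SLop, hSn, hS1] at e
  simp [hqb] at e
  have e2 : a n x₀ * deriv (b (n-1)) x₀ + c' n x₀ * b (n-1) x₀
      = deriv (c n) x₀ + b' n x₀ * c n x₀ := e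
  linear_combination -e2

lemma hDeriv (a b c b' c' : ℤ → ℝ → ℂ)
    (haS : ∀ n, ContDiff ℝ (⊤ : ℕ∞) (a n)) (hbS : ∀ n, ContDiff ℝ (⊤ : ℕ∞) (b n))
    (hcS : ∀ n, ContDiff ℝ (⊤ : ℕ∞) (c n)) (ha : ∀ n x, a n x ≠ 0)
    (hA : ∀ n x, c' n x = deriv (a n) x + c n x + b' n x * a n x - a n x * b (n-1) x)
    (hB : ∀ n x, deriv (c n) x + b' n x * c n x
        = a n x * deriv (b (n-1)) x + c' n x * b (n-1) x) :
    ∀ n x, deriv (fun y => c n y / a n y - b (n-1) y) x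
      = (b (n-1) x - b' n x - deriv (a n) x / a n x) * (c n x / a n x - b (n-1) x) := by
  intro n x
  have h1 : HasDerivAt (c n) (deriv (c n) x) x :=
    ((hcS n).differentiable (by simp) x).hasDerivAt
  have h2 : HasDerivAt (a n) (deriv (a n) x) x :=
    ((haS n).differentiable (by simp) x).hasDerivAt
  have h3 : HasDerivAt (b (n-1)) (deriv (b (n-1)) x) x :=
    ((hbS (n-1)).differentiable (by simp) x).hasDerivAt
  have hder := (h1.div h2 (ha n x)).sub h3
  rw [show (fun y => c n y / a n y - b (n-1) y) = c n / a n - b (n-1) from rfl, hder.deriv]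
  have hB' : deriv (c n) x
      = a n x * deriv (b (n-1)) x + c' n x * b (n-1) x - b' n x * c n x := by
    linear_combination hB n x
  rw [hB', hA n x]
  field_simp [ha n x]
  ring

/-- for three consecutive operators of a semi-discrete Laplace series,
`k_{j+1} = h_j`, `k_j = h_{j-1}`, and the semi-discrete 2D Toda lattice identity holds. -/
theorem stmt17 (a₀ b₀ c₀ a₁ b₁ c₁ a₂ b₂ c₂ : ℤ → ℝ → ℂ)
    (ha₀S : ∀ n, ContDiff ℝ (⊤ : ℕ∞) (a₀ n)) (hb₀S : ∀ n, ContDiff ℝ (⊤ : ℕ∞) (b₀ n))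
    (hc₀S : ∀ n, ContDiff ℝ (⊤ : ℕ∞) (c₀ n))
    (ha₁S : ∀ n, ContDiff ℝ (⊤ : ℕ∞) (a₁ n)) (hb₁S : ∀ n, ContDiff ℝ (⊤ : ℕ∞) (b₁ n))
    (hc₁S : ∀ n, ContDiff ℝ (⊤ : ℕ∞) (c₁ n))
    (ha₂S : ∀ n, ContDiff ℝ (⊤ : ℕ∞) (a₂ n)) (hb₂S : ∀ n, ContDiff ℝ (⊤ : ℕ∞) (b₂ n))
    (hc₂S : ∀ n, ContDiff ℝ (⊤ : ℕ∞) (c₂ n))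
    (ha₀ : ∀ n x, a₀ n x ≠ 0) (ha₁ : ∀ n x, a₁ n x ≠ 0) (ha₂ : ∀ n x, a₂ n x ≠ 0)
    (h01 : IsSDLaplaceTransform a₁ b₁ c₁ a₀ b₀ c₀)
    (h12 : IsSDLaplaceTransform a₂ b₂ c₂ a₁ b₁ c₁) :
    (∀ (n : ℤ) (x : ℝ), skInv a₂ b₂ c₂ n x = shInv a₁ b₁ c₁ n x) ∧
    (∀ (n : ℤ) (x : ℝ), skInv a₁ b₁ c₁ n x = shInv a₀ b₀ c₀ n x) ∧
    (∀ (n : ℤ) (x : ℝ),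
      deriv (fun y => shInv a₁ b₁ c₁ n y) x * shInv a₁ b₁ c₁ (n + 1) x
        - deriv (fun y => shInv a₁ b₁ c₁ (n + 1) y) x * shInv a₁ b₁ c₁ n x =
      shInv a₁ b₁ c₁ n x * shInv a₁ b₁ c₁ (n + 1) x *
        (shInv a₂ b₂ c₂ (n + 1) x - shInv a₁ b₁ c₁ (n + 1) x
          - shInv a₁ b₁ c₁ n x + shInv a₀ b₀ c₀ n x)) := by
  obtain ⟨ha2eq, q2, hq2⟩ := h12
  obtain ⟨ha1eq, q1, hq1⟩ := h01
  subst ha2eq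
  subst ha1eq
  obtain ⟨hA1, hB1⟩ := extract_s17 a₂ b₀ c₀ b₁ c₁ q1 ha₀S hb₀S hc₀S hq1
  obtain ⟨hA2, hB2⟩ := extract_s17 a₂ b₁ c₁ b₂ c₂ q2 ha₀S hb₁S hc₁S hq2
  have hd := hDeriv a₂ b₁ c₁ b₂ c₂ ha₀S hb₁S hc₁S ha₀ hA2 hB2
  refine ⟨?_, ?_, ?_⟩
  · intro n x
    simp only [skInv, shInv]
    field_simp [ha₀ n x]
    linear_combination hA2 n x
  · intro n x
    simp only [skInv, shInv]
    field_simp [ha₀ n x]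
    linear_combination hA1 n x
  · intro n x
    simp only [shInv]
    rw [hd n x, hd (n+1) x]
    rw [hA2 (n+1) x, hA1 n x]
    field_simp [ha₀ n x, ha₀ (n+1) x]
    ring
end
end
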